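/- arXiv:1112.2632 — 2 statements merged into one kernel-verified Lean document; each statement's English description precedes it below -/
import Mathlib

section
/- Let H = (V, E) be a hypergraph whose associated bipartite graph bip H is connected, and let f : E → ℕ be a hypertree in H. Then for every nonempty subset E' ⊆ E one has ∑_{e ∈ E'} f(e) ≤ μ(E') = |⋃E'| − c(E'). -/
open SimpleGraph

/-- The bipartite graph associated to a hypergraph with hyperedge set `E`,
vertex set `V`, and incidence function `I`. -/
def bip {V E : Type*} (I : E → Finset V) : SimpleGraph (E ⊕ V) :=
  SimpleGraph.fromRel fun a b =>
    ∃ e v, a = Sum.inl e ∧ b = Sum.inr v ∧ v ∈ I e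

/-- `f : E → ℕ` is a hypertree: there is a spanning tree of `bip I` whose
degree at each `e ∈ E` is `f e + 1`. -/
def IsHypertree {V E : Type*} (I : E → Finset V) (f : E → ℕ) : Prop :=
  ∃ T : SimpleGraph (E ⊕ V), T ≤ bip I ∧ T.IsTree ∧
    ∀ e : E, (T.neighborSet (Sum.inl e)).ncard = f e + 1

/-- The vertex set `E' ⊔ ⋃ E'` of the restriction `bip H |_{E'}`. -/
def suppSet {V E : Type*} (I : E → Finset V) (E' : Finset E) : Set (E ⊕ V) :=
  (Sum.inl '' {e | e ∈ E'}) ∪ (Sum.inr '' {v | ∃ e ∈ E', v ∈ I e})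

/-- `c(E')`: the number of connected components of the induced subgraph of
`bip I` on `E' ⊔ ⋃ E'`. -/
noncomputable def numComp {V E : Type*} (I : E → Finset V) (E' : Finset E) : ℕ :=
  Nat.card ((bip I).induce (suppSet I E')).ConnectedComponent

/-- `μ(E') = |⋃ E'| - c(E')`. -/
noncomputable def mu {V E : Type*} [DecidableEq V] (I : E → Finset V)
    (E' : Finset E) : ℤ :=
  ((E'.biUnion I).card : ℤ) - numComp I E'

/-!
Let `T` be the spanning tree witnessing `f`, and restrict it to `S = E' ⊔ ⋃E'`. Every edge of `T`
joins some `e ∈ E` to a vertex of `e`, so the edges of `T` inside `S` are exactly the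
`∑_{e ∈ E'} (f e + 1)` edges of `T` at the hyperedges of `E'`. The restriction is a forest, hence
has at most `|S| - c` edges, where `c` is its number of components; since it is a subgraph of
`bip H |_{E'}`, `c ≥ c(E')`. With `|S| = |E'| + |⋃E'|` this is the claimed inequality.
-/

namespace SimpleGraph

variable {W : Type*} [Finite W] {G : SimpleGraph W}

theorem card_connectedComponent_lt_deleteEdges_of_isBridge {u v : W} (hadj : G.Adj u v)
    (h : G.IsBridge s(u, v)) :
    Nat.card G.ConnectedComponent < Nat.card (G.deleteEdges {s(u, v)}).ConnectedComponent := by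
  have hsurj := ConnectedComponent.surjective_map_ofLE (G.deleteEdges_le {s(u, v)})
  refine (Nat.card_le_card_of_surjective _ hsurj).lt_of_ne fun hcard => isBridge_iff.mp h ?_
  exact ConnectedComponent.exact <| (hsurj.bijective_of_nat_card_le hcard.ge).injective <|
    ConnectedComponent.sound hadj.reachable

theorem IsAcyclic.card_edgeSet_add_card_connectedComponent_le (hG : G.IsAcyclic) :
    Nat.card G.edgeSet + Nat.card G.ConnectedComponent ≤ Nat.card W := by
  induction hn : Nat.card G.edgeSet generalizing G with
  | zero => simpa using Nat.card_le_card_of_surjective G.connectedComponentMk Quot.mk_surjective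
  | succ n ih =>
    obtain ⟨e, he⟩ : G.edgeSet.Nonempty :=
      Set.nonempty_of_ncard_ne_zero (by rw [← Nat.card_coe_set_eq, hn]; omega)
    induction e using Sym2.inductionOn with | hf u v =>
    have hlt := card_connectedComponent_lt_deleteEdges_of_isBridge (u := u) (v := v) he
      (isAcyclic_iff_forall_adj_isBridge.mp hG he)
    have hn' : Nat.card (G.deleteEdges {s(u, v)}).edgeSet = n := by
      rw [Nat.card_coe_set_eq, edgeSet_deleteEdges, Set.ncard_sdiff_singleton_of_mem he,
        ← Nat.card_coe_set_eq, hn, Nat.add_sub_cancel]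
    have := ih (hG.anti (G.deleteEdges_le _)) hn'
    omega

end SimpleGraph

section Hypergraph

variable {V E : Type*} (I : E → Finset V) {e e' : E} {v v' : V}

@[simp]
theorem bip_adj_inl_inr : (bip I).Adj (.inl e) (.inr v) ↔ v ∈ I e := by
  simp [bip]

@[simp]
theorem not_bip_adj_inl_inl : ¬(bip I).Adj (.inl e) (.inl e') := by
  simp [bip]

@[simp]
theorem not_bip_adj_inr_inr : ¬(bip I).Adj (.inr v) (.inr v') := by
  simp [bip]

variable (E' : Finset E)

@[simp]
theorem inl_mem_suppSet : .inl e ∈ suppSet I E' ↔ e ∈ E' := by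
  simp [suppSet]

@[simp]
theorem inr_mem_suppSet : .inr v ∈ suppSet I E' ↔ ∃ e ∈ E', v ∈ I e := by
  simp [suppSet]

theorem suppSet_eq_disjSum [DecidableEq V] : suppSet I E' = ↑(E'.disjSum (E'.biUnion I)) := by
  ext (e | v) <;> simp

theorem finite_suppSet [DecidableEq V] : (suppSet I E').Finite :=
  suppSet_eq_disjSum I E' ▸ Finset.finite_toSet _

theorem ncard_suppSet [DecidableEq V] :
    (suppSet I E').ncard = E'.card + (E'.biUnion I).card := by
  rw [suppSet_eq_disjSum, Set.ncard_coe_finset, Finset.card_disjSum]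

variable {I E'} {T : SimpleGraph (E ⊕ V)}

theorem exists_eq_inr_of_adj_inl (hT : T ≤ bip I) {w : E ⊕ V} (h : T.Adj (.inl e) w) :
    ∃ v ∈ I e, w = .inr v := by
  rcases w with e' | v
  · exact absurd (hT h) (not_bip_adj_inl_inl I)
  · exact ⟨v, (bip_adj_inl_inr I).mp (hT h), rfl⟩

theorem mem_suppSet_of_adj_inl (hT : T ≤ bip I) (he : e ∈ E') {w : E ⊕ V}
    (h : T.Adj (.inl e) w) : w ∈ suppSet I E' := by
  obtain ⟨v, hv, rfl⟩ := exists_eq_inr_of_adj_inl hT h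
  exact (inr_mem_suppSet I E').mpr ⟨e, he, hv⟩

theorem finite_neighborSet_inl (hT : T ≤ bip I) (e : E) : (T.neighborSet (.inl e)).Finite :=
  ((I e).finite_toSet.image Sum.inr).subset fun _ h =>
    let ⟨v, hv, hw⟩ := exists_eq_inr_of_adj_inl hT h; ⟨v, hv, hw.symm⟩

theorem card_edgeSet_induce_suppSet (hT : T ≤ bip I) :
    Nat.card (T.induce (suppSet I E')).edgeSet = ∑ e ∈ E', (T.neighborSet (.inl e)).ncard := by
  have (e : E) : Finite (T.neighborSet (.inl e)) := (finite_neighborSet_inl hT e).to_subtype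
  rw [← Finset.sum_coe_sort]
  simp_rw [← Nat.card_coe_set_eq]
  rw [← Nat.card_sigma]
  symm
  -- an edge of `T` inside the support has exactly one endpoint `inl e`, and then `e ∈ E'`
  refine Nat.card_eq_of_bijective
    (fun x => ⟨s(⟨.inl x.1, (inl_mem_suppSet I E').mpr x.1.2⟩,
      ⟨x.2, mem_suppSet_of_adj_inl hT x.1.2 x.2.2⟩), x.2.2⟩) ⟨?_, ?_⟩
  · rintro ⟨e, w, hw⟩ ⟨e', w', hw'⟩ h
    simp only [Sym2.eq_iff, Subtype.ext_iff] at h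
    rcases h with ⟨he, rfl⟩ | ⟨he, -⟩
    · obtain rfl : e = e' := Subtype.ext (Sum.inl_injective he)
      rfl
    · exact absurd (hT (he ▸ hw')) (not_bip_adj_inl_inl I)
  · rintro ⟨q, hq⟩
    induction q using Sym2.inductionOn with | hf a b =>
    obtain ⟨a | v, ha⟩ := a
    · exact ⟨⟨⟨a, (inl_mem_suppSet I E').mp ha⟩, ⟨b, hq⟩⟩, rfl⟩
    obtain ⟨e | v', hb⟩ := b
    · exact ⟨⟨⟨e, (inl_mem_suppSet I E').mp hb⟩, ⟨.inr v, hq.symm⟩⟩, Subtype.ext Sym2.eq_swap⟩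
    · exact absurd (hT hq) (not_bip_adj_inr_inr I)

end Hypergraph

theorem hypertree_le_mu_general {V E : Type*} [DecidableEq V]
    (I : E → Finset V) (f : E → ℕ) (hf : IsHypertree I f) (E' : Finset E) :
    (∑ e ∈ E', (f e : ℤ)) ≤ mu I E' := by
  obtain ⟨T, hTle, hT, hdeg⟩ := hf
  have := (finite_suppSet I E').to_subtype
  have hforest := (hT.isAcyclic.induce (suppSet I E')).card_edgeSet_add_card_connectedComponent_le
  have hcomp : numComp I E' ≤ Nat.card (T.induce (suppSet I E')).ConnectedComponent :=
    ConnectedComponent.card_le_card_of_le fun _ _ h => hTle h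
  rw [card_edgeSet_induce_suppSet hTle, Nat.card_coe_set_eq, ncard_suppSet] at hforest
  simp only [hdeg, Finset.sum_add_distrib, Finset.sum_const, smul_eq_mul, mul_one] at hforest
  rw [mu, ← Nat.cast_sum]
  omega

/-- For every hypertree `f` and every nonempty `E' ⊆ E`,
`∑_{e ∈ E'} f e ≤ μ(E')`. -/
theorem hypertree_le_mu {V E : Type*} [Fintype V] [Fintype E] [DecidableEq V]
    (I : E → Finset V) (hne : ∀ e, (I e).Nonempty) (hconn : (bip I).Connected)
    (f : E → ℕ) (hf : IsHypertree I f) (E' : Finset E) (hE' : E'.Nonempty) :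
    (∑ e ∈ E', (f e : ℤ)) ≤ mu I E' :=
  hypertree_le_mu_general I f hf E'
end

section
/- Let H = (V, E) be a hypergraph whose associated bipartite graph bip H is connected. Then the set function μ on subsets of E defined by μ(E') = |⋃E'| − c(E') (and μ(∅) = 0) is non-decreasing: for all subsets E'' ⊆ E' ⊆ E one has μ(E'') ≤ μ(E'). -/
open SimpleGraph

section Aux

variable {V E : Type*}

lemma mem_suppSet_inl {I : E → Finset V} {s : Finset E} {e : E} :
    (Sum.inl e : E ⊕ V) ∈ suppSet I s ↔ e ∈ s := by
  simp [suppSet]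

lemma mem_suppSet_inr {I : E → Finset V} {s : Finset E} {v : V} :
    (Sum.inr v : E ⊕ V) ∈ suppSet I s ↔ ∃ e ∈ s, v ∈ I e := by
  simp [suppSet]

lemma bip_adj {I : E → Finset V} {e : E} {v : V} (hv : v ∈ I e) :
    (bip I).Adj (Sum.inl e) (Sum.inr v) := by
  rw [bip, fromRel_adj]
  exact ⟨by simp, Or.inl ⟨e, v, rfl, rfl, hv⟩⟩

/-- Inclusion of induced subgraphs as a graph homomorphism. -/
def inclHom (I : E → Finset V) {A B : Set (E ⊕ V)} (h : A ⊆ B) :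
    (bip I).induce A →g (bip I).induce B where
  toFun x := ⟨x.1, h x.2⟩
  map_rel' := fun hab => hab

lemma suppSet_mono {I : E → Finset V} {s t : Finset E} (h : s ⊆ t) :
    suppSet I s ⊆ suppSet I t := by
  intro x hx
  rcases x with e | v
  · exact mem_suppSet_inl.mpr (h (mem_suppSet_inl.mp hx))
  · obtain ⟨e, he, hv⟩ := mem_suppSet_inr.mp hx
    exact mem_suppSet_inr.mpr ⟨e, h he, hv⟩

lemma finite_cc {W : Type*} [Finite W] (G : SimpleGraph W) :
    Finite G.ConnectedComponent :=
  Finite.of_surjective G.connectedComponentMk Quot.mk_surjective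

/-- Adding one hyperedge increases the number of components by at most one. -/
lemma numComp_insert_le [Fintype V] [Fintype E] [DecidableEq E] (I : E → Finset V)
    (s : Finset E) (e : E) :
    numComp I (insert e s) ≤ numComp I s + 1 := by
  classical
  have hsub : suppSet I s ⊆ suppSet I (insert e s) :=
    suppSet_mono (Finset.subset_insert e s)
  have hemem : (Sum.inl e : E ⊕ V) ∈ suppSet I (insert e s) :=
    mem_suppSet_inl.mpr (Finset.mem_insert_self e s)
  set G' := (bip I).induce (suppSet I (insert e s)) with hG'
  set G₀ := (bip I).induce (suppSet I s) with hG₀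
  haveI : Finite G₀.ConnectedComponent := finite_cc _
  haveI : Finite G'.ConnectedComponent := finite_cc _
  let f : G₀.ConnectedComponent ⊕ Unit → G'.ConnectedComponent :=
    Sum.elim (ConnectedComponent.map (inclHom I hsub))
      (fun _ => G'.connectedComponentMk ⟨Sum.inl e, hemem⟩)
  have hsurj : Function.Surjective f := by
    intro c
    refine ConnectedComponent.ind (fun x => ?_) c
    obtain ⟨x, hx⟩ := x
    rcases x with a | v
    · rcases Finset.mem_insert.mp (mem_suppSet_inl.mp hx) with rfl | ha
      · exact ⟨Sum.inr (), rfl⟩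
      · exact ⟨Sum.inl (G₀.connectedComponentMk ⟨Sum.inl a, mem_suppSet_inl.mpr ha⟩), rfl⟩
    · obtain ⟨e', he', hv⟩ := mem_suppSet_inr.mp hx
      rcases Finset.mem_insert.mp he' with rfl | he's
      · refine ⟨Sum.inr (), ?_⟩
        have hadj : G'.Adj ⟨Sum.inl e', hemem⟩ ⟨Sum.inr v, hx⟩ := bip_adj hv
        exact ConnectedComponent.connectedComponentMk_eq_of_adj hadj
      · exact ⟨Sum.inl (G₀.connectedComponentMk
          ⟨Sum.inr v, mem_suppSet_inr.mpr ⟨e', he's, hv⟩⟩), rfl⟩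
  have := Nat.card_le_card_of_surjective f hsurj
  rw [Nat.card_sum] at this
  simpa [numComp, ← hG', ← hG₀] using this

/-- If the new hyperedge meets the old support, the number of components
does not increase. -/
lemma numComp_insert_le_of_meet [Fintype V] [Fintype E] [DecidableEq E] (I : E → Finset V)
    (s : Finset E) (e : E) (v₀ : V) (hv₀ : v₀ ∈ I e) (e₀ : E) (he₀ : e₀ ∈ s)
    (hv₀' : v₀ ∈ I e₀) :
    numComp I (insert e s) ≤ numComp I s := by
  classical
  have hsub : suppSet I s ⊆ suppSet I (insert e s) :=
    suppSet_mono (Finset.subset_insert e s)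
  have hemem : (Sum.inl e : E ⊕ V) ∈ suppSet I (insert e s) :=
    mem_suppSet_inl.mpr (Finset.mem_insert_self e s)
  have hv₀mem : (Sum.inr v₀ : E ⊕ V) ∈ suppSet I s :=
    mem_suppSet_inr.mpr ⟨e₀, he₀, hv₀'⟩
  set G' := (bip I).induce (suppSet I (insert e s)) with hG'
  set G₀ := (bip I).induce (suppSet I s) with hG₀
  haveI : Finite G₀.ConnectedComponent := finite_cc _
  let f : G₀.ConnectedComponent → G'.ConnectedComponent :=
    ConnectedComponent.map (inclHom I hsub)
  have he_comp : G'.connectedComponentMk ⟨Sum.inl e, hemem⟩ =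
      G'.connectedComponentMk ⟨Sum.inr v₀, hsub hv₀mem⟩ :=
    ConnectedComponent.connectedComponentMk_eq_of_adj (bip_adj hv₀)
  have hsurj : Function.Surjective f := by
    intro c
    refine ConnectedComponent.ind (fun x => ?_) c
    obtain ⟨x, hx⟩ := x
    rcases x with a | v
    · rcases Finset.mem_insert.mp (mem_suppSet_inl.mp hx) with rfl | ha
      · exact ⟨G₀.connectedComponentMk ⟨Sum.inr v₀, hv₀mem⟩, he_comp.symm⟩
      · exact ⟨G₀.connectedComponentMk ⟨Sum.inl a, mem_suppSet_inl.mpr ha⟩, rfl⟩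
    · obtain ⟨e', he', hv⟩ := mem_suppSet_inr.mp hx
      rcases Finset.mem_insert.mp he' with rfl | he's
      · refine ⟨G₀.connectedComponentMk ⟨Sum.inr v₀, hv₀mem⟩, ?_⟩
        have hadj : G'.Adj ⟨Sum.inl e', hemem⟩ ⟨Sum.inr v, hx⟩ := bip_adj hv
        exact he_comp.symm.trans (ConnectedComponent.connectedComponentMk_eq_of_adj hadj)
      · exact ⟨G₀.connectedComponentMk
          ⟨Sum.inr v, mem_suppSet_inr.mpr ⟨e', he's, hv⟩⟩, rfl⟩
  have := Nat.card_le_card_of_surjective f hsurj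
  simpa [numComp, ← hG', ← hG₀] using this

lemma mu_le_insert [Fintype V] [Fintype E] [DecidableEq E] [DecidableEq V] (I : E → Finset V)
    (hne : ∀ e, (I e).Nonempty) (s : Finset E) (e : E) :
    mu I s ≤ mu I (insert e s) := by
  classical
  by_cases hcap : ∃ v₀ ∈ I e, ∃ e₀ ∈ s, v₀ ∈ I e₀
  · obtain ⟨v₀, hv₀, e₀, he₀, hv₀'⟩ := hcap
    have h1 : (s.biUnion I).card ≤ ((insert e s).biUnion I).card :=
      Finset.card_le_card (Finset.biUnion_subset_biUnion_of_subset_left I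
        (Finset.subset_insert e s))
    have h2 := numComp_insert_le_of_meet I s e v₀ hv₀ e₀ he₀ hv₀'
    unfold mu
    omega
  · have hdisj : Disjoint (I e) (s.biUnion I) := by
      rw [Finset.disjoint_left]
      intro v hv hv'
      obtain ⟨e₀, he₀, hv₀'⟩ := Finset.mem_biUnion.mp hv'
      exact hcap ⟨v, hv, e₀, he₀, hv₀'⟩
    have h1 : (s.biUnion I).card + 1 ≤ ((insert e s).biUnion I).card := by
      rw [Finset.biUnion_insert, Finset.card_union_of_disjoint hdisj]
      have := Finset.card_pos.mpr (hne e)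
      omega
    have h2 := numComp_insert_le I s e
    unfold mu
    omega

end Aux

/-- The set function `μ` is non-decreasing: `E'' ⊆ E'` implies
`μ(E'') ≤ μ(E')`. -/
theorem mu_monotone {V E : Type*} [Fintype V] [Fintype E] [DecidableEq V]
    (I : E → Finset V) (hne : ∀ e, (I e).Nonempty) (hconn : (bip I).Connected)
    (E' E'' : Finset E) (h : E'' ⊆ E') :
    mu I E'' ≤ mu I E' := by
  classical
  have key : ∀ n (s t : Finset E), s ⊆ t → (t \ s).card = n → mu I s ≤ mu I t := by
    intro n
    induction n with
    | zero =>
      intro s t hst h0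
      have : s = t :=
        Finset.Subset.antisymm hst
          (Finset.sdiff_eq_empty_iff_subset.mp (Finset.card_eq_zero.mp h0))
      rw [this]
    | succ n ih =>
      intro s t hst hcard
      obtain ⟨e, he⟩ : (t \ s).Nonempty := Finset.card_pos.mp (by omega)
      obtain ⟨het, hes⟩ := Finset.mem_sdiff.mp he
      have hsub : insert e s ⊆ t := Finset.insert_subset het hst
      have hcard' : (t \ insert e s).card = n := by
        have h1 := Finset.card_sdiff_of_subset hst
        have h2 := Finset.card_sdiff_of_subset hsub
        have h3 : (insert e s).card = s.card + 1 := Finset.card_insert_of_notMem hes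
        have h4 := Finset.card_le_card hsub
        omega
      exact le_trans (mu_le_insert I hne s e) (ih (insert e s) t hsub hcard')
  exact key _ E'' E' h rfl
end
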